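/- arXiv:2106.12911 — 4 statements merged into one kernel-verified Lean document; each statement's English description precedes it below -/
import Mathlib

section
/- With ρ₀ and ρ₁ as given, set Y = (1/6)·I₄, Q₀ = 0, and Q₁ = (1/6)I₄ − (1/2)ρ₁^{T_B}. Then Q₁ is positive semidefinite (indeed Q₁ = (1/6)|Φ₊⟩⟨Φ₊|), Y − Q₀^{T_B} − ρ₀/2 = (1/6)|Ψ₋⟩⟨Ψ₋| ⪰ 0, Y − Q₁^{T_B} − ρ₁/2 = 0, and Tr[Y] = 2/3. Hence this is a feasible dual solution with value 2/3, proving that for any POVM {Π₀,Π₁} on ℂ²⊗ℂ² with both Π₀^{T_B} and Π₁^{T_B} positive semidefinite, (1/2)Tr[Π₀ρ₀+Π₁ρ₁] ≤ 2/3. -/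
open Matrix ComplexOrder

noncomputable def rho0 : Matrix (Fin 4) (Fin 4) ℂ :=
  (1/6 : ℂ) • !![2,0,0,0; 0,1,1,0; 0,1,1,0; 0,0,0,2]

noncomputable def rho1 : Matrix (Fin 4) (Fin 4) ℂ :=
  (1/6 : ℂ) • !![1,0,0,0; 0,2,-1,0; 0,-1,2,0; 0,0,0,1]

/-- Combine indices for the partial transpose on the second qubit. -/
def comb (i j : Fin 4) : Fin 4 := ⟨2 * (i.val / 2) + j.val % 2, by omega⟩

/-- Partial transpose with respect to the second qubit. -/
def ptB (M : Matrix (Fin 4) (Fin 4) ℂ) : Matrix (Fin 4) (Fin 4) ℂ :=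
  Matrix.of fun i j => M (comb i j) (comb j i)

noncomputable def s2 : ℂ := (Real.sqrt 2 : ℝ)

noncomputable def phiPlus : Fin 4 → ℂ := ![1/s2, 0, 0, 1/s2]

noncomputable def psiMinus : Fin 4 → ℂ := ![0, 1/s2, -(1/s2), 0]

/-- Outer product |v⟩⟨v|. -/
noncomputable def outer (v : Fin 4 → ℂ) : Matrix (Fin 4) (Fin 4) ℂ :=
  Matrix.vecMulVec v (star v)

noncomputable def Ydual : Matrix (Fin 4) (Fin 4) ℂ := (1/6 : ℂ) • (1 : Matrix (Fin 4) (Fin 4) ℂ)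

noncomputable def Q1dual : Matrix (Fin 4) (Fin 4) ℂ :=
  (1/6 : ℂ) • (1 : Matrix (Fin 4) (Fin 4) ℂ) - (1/2 : ℂ) • ptB rho1

-- Auxiliary lemmas

lemma ptB_eq (M : Matrix (Fin 4) (Fin 4) ℂ) : ptB M =
    !![M 0 0, M 1 0, M 0 2, M 1 2;
       M 0 1, M 1 1, M 0 3, M 1 3;
       M 2 0, M 3 0, M 2 2, M 3 2;
       M 2 1, M 3 1, M 2 3, M 3 3] := by
  ext i j
  fin_cases i <;> fin_cases j <;> rfl

lemma ptB_zero : ptB 0 = 0 := by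
  ext i j; rfl

lemma hs2 : s2 * s2 = 2 := by
  simp only [s2, ← Complex.ofReal_mul]
  norm_num [Real.mul_self_sqrt]

lemma hs2' : star s2 = s2 := by
  simp [s2]

lemma hs2ne : s2 ≠ 0 := by
  intro h
  have := hs2
  rw [h] at this
  norm_num at this

lemma outer_psd (v : Fin 4 → ℂ) : (outer v).PosSemidef := by
  refine .of_dotProduct_mulVec_nonneg ?_ ?_
  · ext i j
    simp [outer, Matrix.vecMulVec_apply, Matrix.conjTranspose_apply, mul_comm]
  · intro x
    have h : star x ⬝ᵥ (outer v) *ᵥ x = star (star v ⬝ᵥ x) * (star v ⬝ᵥ x) := by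
      simp only [outer, dotProduct, Matrix.mulVec, Matrix.vecMulVec_apply, Pi.star_apply,
        Fin.sum_univ_four, star_add, star_mul']
      ring_nf
      simp only [Complex.star_def, RingHom.map_mul, Complex.conj_conj]
      ring
    rw [h]
    exact star_mul_self_nonneg _

lemma smul_psd {c : ℂ} (hc : 0 ≤ c) {M : Matrix (Fin 4) (Fin 4) ℂ} (hM : M.PosSemidef) :
    (c • M).PosSemidef := by
  have hcs : star c = c := by
    rw [Complex.star_def, Complex.conj_eq_iff_im]
    exact ((Complex.le_def.mp hc).2).symm
  refine .of_dotProduct_mulVec_nonneg ?_ ?_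
  · show (c • M)ᴴ = c • M
    rw [Matrix.conjTranspose_smul, hcs, hM.1.eq]
  · intro x
    rw [Matrix.smul_mulVec, dotProduct_smul, smul_eq_mul]
    exact mul_nonneg hc (hM.dotProduct_mulVec_nonneg x)

lemma psd_trace_nonneg {M : Matrix (Fin 4) (Fin 4) ℂ} (hM : M.PosSemidef) : 0 ≤ M.trace := by
  have h : ∀ i, 0 ≤ M i i := fun i => by
    have := hM.dotProduct_mulVec_nonneg (Pi.single i 1)
    simpa [Matrix.mulVec_single, dotProduct, Pi.single_apply, apply_ite] using this
  exact Finset.sum_nonneg fun i _ => h i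

open scoped MatrixOrder in
lemma trace_mul_nonneg {A B : Matrix (Fin 4) (Fin 4) ℂ} (hA : A.PosSemidef) (hB : B.PosSemidef) :
    0 ≤ (A * B).trace := by
  have hs : CFC.sqrt A * CFC.sqrt A = A := CFC.sqrt_mul_sqrt_self A hA.nonneg
  have hH : (CFC.sqrt A)ᴴ = CFC.sqrt A := (CFC.sqrt_nonneg A).posSemidef.1
  have h2 : (A * B).trace = (CFC.sqrt A * B * (CFC.sqrt A)ᴴ).trace := by
    conv_lhs => rw [← hs, mul_assoc]
    rw [hH, Matrix.trace_mul_comm]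
  rw [h2]
  exact psd_trace_nonneg (hB.mul_mul_conjTranspose_same (CFC.sqrt A))

lemma trace_ptB_mul (A B : Matrix (Fin 4) (Fin 4) ℂ) :
    ((ptB A) * B).trace = (A * ptB B).trace := by
  rw [ptB_eq A, ptB_eq B]
  simp [Matrix.trace, Matrix.diag, Matrix.mul_apply, Fin.sum_univ_four,
    Matrix.vecHead, Matrix.vecTail]
  ring

lemma hstar : (starRingEnd ℂ) s2 = s2 := hs2'

lemma hinv : s2⁻¹ * s2⁻¹ = (2:ℂ)⁻¹ := by
  rw [← mul_inv, hs2]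

set_option maxHeartbeats 1000000 in
lemma Q1dual_eq : Q1dual = (1/6 : ℂ) • outer phiPlus := by
  ext i j
  fin_cases i <;> fin_cases j <;>
    simp [Q1dual, outer, ptB_eq, rho1, phiPlus, Matrix.vecMulVec_apply, Matrix.one_apply,
      Matrix.vecHead, Matrix.vecTail, hstar, -Matrix.vecMulVec_cons, -Matrix.cons_vecMulVec] <;>
    norm_num [hstar, hinv]

set_option maxHeartbeats 1000000 in
lemma slack0_eq : Ydual - ptB 0 - (1/2 : ℂ) • rho0 = (1/6 : ℂ) • outer psiMinus := by
  rw [ptB_zero]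
  ext i j
  fin_cases i <;> fin_cases j <;>
    simp [Ydual, outer, rho0, psiMinus, Matrix.vecMulVec_apply, Matrix.one_apply,
      Matrix.vecHead, Matrix.vecTail, hstar, -Matrix.vecMulVec_cons, -Matrix.cons_vecMulVec] <;>
    norm_num [hstar, hinv]

set_option maxHeartbeats 1000000 in
lemma slack1_eq : Ydual - ptB Q1dual - (1/2 : ℂ) • rho1 = 0 := by
  ext i j
  fin_cases i <;> fin_cases j <;>
    simp [Ydual, Q1dual, ptB_eq, rho1, Matrix.one_apply, Matrix.vecHead, Matrix.vecTail]

lemma traceY : Ydual.trace = 2/3 := by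
  simp [Ydual, Matrix.trace_smul, Matrix.trace_one]
  norm_num

lemma c16nonneg : (0:ℂ) ≤ (1/6 : ℂ) := by
  rw [Complex.le_def]
  norm_num

theorem stmt5 :
    Q1dual.PosSemidef ∧ Q1dual = (1/6 : ℂ) • outer phiPlus ∧
    Ydual - ptB 0 - (1/2 : ℂ) • rho0 = (1/6 : ℂ) • outer psiMinus ∧
    (Ydual - ptB 0 - (1/2 : ℂ) • rho0).PosSemidef ∧
    Ydual - ptB Q1dual - (1/2 : ℂ) • rho1 = 0 ∧
    Ydual.trace = 2/3 ∧
    ∀ P0 P1 : Matrix (Fin 4) (Fin 4) ℂ,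
      P0.PosSemidef → P1.PosSemidef → P0 + P1 = 1 →
      (ptB P0).PosSemidef → (ptB P1).PosSemidef →
      ((1/2 : ℂ) * ((P0 * rho0 + P1 * rho1).trace)).re ≤ 2/3 := by
  have hQpsd : Q1dual.PosSemidef := by
    rw [Q1dual_eq]; exact smul_psd c16nonneg (outer_psd _)
  have hA0psd : (Ydual - ptB 0 - (1/2 : ℂ) • rho0).PosSemidef := by
    rw [slack0_eq]; exact smul_psd c16nonneg (outer_psd _)
  refine ⟨hQpsd, Q1dual_eq, slack0_eq, hA0psd, slack1_eq, traceY, ?_⟩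
  intro P0 P1 h0 h1 hsum hpt0 hpt1
  have e1 : ptB Q1dual = Ydual - (1/2 : ℂ) • rho1 := by
    have := slack1_eq
    rw [sub_sub, sub_eq_zero] at this
    rw [this]; abel
  have e2 : (Q1dual * ptB P1).trace = ((ptB Q1dual) * P1).trace :=
    (trace_ptB_mul Q1dual P1).symm
  have hY : (Ydual * P0).trace + (Ydual * P1).trace = Ydual.trace := by
    rw [← Matrix.trace_add, ← mul_add, hsum, mul_one]
  have key : (1/2 : ℂ) * ((P0 * rho0 + P1 * rho1).trace) =
      Ydual.trace - ((Ydual - ptB 0 - (1/2 : ℂ) • rho0) * P0).trace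
        - (Q1dual * ptB P1).trace := by
    rw [e2, e1, ptB_zero, sub_zero]
    simp only [Matrix.sub_mul, Matrix.trace_sub, Matrix.smul_mul, Matrix.trace_smul,
      Matrix.trace_add, smul_eq_mul]
    rw [Matrix.trace_mul_comm P0 rho0, Matrix.trace_mul_comm P1 rho1]
    linear_combination hY
  have n0 : 0 ≤ ((Ydual - ptB 0 - (1/2 : ℂ) • rho0) * P0).trace :=
    trace_mul_nonneg hA0psd h0
  have n1 : 0 ≤ (Q1dual * ptB P1).trace := trace_mul_nonneg hQpsd hpt1
  have r0 : 0 ≤ (((Ydual - ptB 0 - (1/2 : ℂ) • rho0) * P0).trace).re :=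
    (Complex.le_def.mp n0).1
  have r1 : 0 ≤ ((Q1dual * ptB P1).trace).re := (Complex.le_def.mp n1).1
  rw [key, traceY]
  simp only [Complex.sub_re]
  norm_num
  linarith
end

section
/- For every n ≥ 1, the matrices I_{4^n}/6^n − ρ₀^{⊗n}/2^n and I_{4^n}/6^n − (ρ₁^{T_B})^{⊗n}/2^n are positive semidefinite. -/
open Matrix ComplexOrder

/-- Encode a pair of qubit indices (Alice bit, Bob bit) as an index of `Fin 4`. -/
def enc (p : Fin 2 × Fin 2) : Fin 4 := ⟨2 * p.1.val + p.2.val, by omega⟩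

/-- Reindex a two-qubit matrix by pairs of qubit indices. -/
noncomputable def toPair (A : Matrix (Fin 4) (Fin 4) ℂ) :
    Matrix (Fin 2 × Fin 2) (Fin 2 × Fin 2) ℂ :=
  Matrix.of fun p q => A (enc p) (enc q)

/-- Partial transpose of a single pair-matrix with respect to the second (Bob) qubit. -/
noncomputable def ptB2 (M : Matrix (Fin 2 × Fin 2) (Fin 2 × Fin 2) ℂ) :
    Matrix (Fin 2 × Fin 2) (Fin 2 × Fin 2) ℂ :=
  Matrix.of fun p q => M (p.1, q.2) (q.1, p.2)

/-- n-fold tensor power of a pair-matrix, indexed by functions `Fin n → Fin 2 × Fin 2`. -/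
noncomputable def TP (n : ℕ) (A : Matrix (Fin 2 × Fin 2) (Fin 2 × Fin 2) ℂ) :
    Matrix (Fin n → Fin 2 × Fin 2) (Fin n → Fin 2 × Fin 2) ℂ :=
  Matrix.of fun p q => ∏ i, A (p i) (q i)

/-- The tensor product ρ_s = ρ_{s₁} ⊗ ⋯ ⊗ ρ_{s_n}. -/
noncomputable def rhoProd {n : ℕ} (s : Fin n → Bool) :
    Matrix (Fin n → Fin 2 × Fin 2) (Fin n → Fin 2 × Fin 2) ℂ :=
  Matrix.of fun p q => ∏ i, (if s i then toPair rho1 else toPair rho0) (p i) (q i)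

/-- Partial transpose over all Bob qubits. -/
noncomputable def ptBn {n : ℕ}
    (M : Matrix (Fin n → Fin 2 × Fin 2) (Fin n → Fin 2 × Fin 2) ℂ) :
    Matrix (Fin n → Fin 2 × Fin 2) (Fin n → Fin 2 × Fin 2) ℂ :=
  Matrix.of fun p q => M (fun i => ((p i).1, (q i).2)) (fun i => ((q i).1, (p i).2))

/-! Auxiliary lemmas -/

lemma TP_mul (n : ℕ) (A B : Matrix (Fin 2 × Fin 2) (Fin 2 × Fin 2) ℂ) :
    TP n A * TP n B = TP n (A * B) := by
  ext p r
  simp only [TP, Matrix.mul_apply, Matrix.of_apply]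
  have hmerge : ∀ x : Fin n → Fin 2 × Fin 2,
      (∏ i, A (p i) (x i)) * ∏ i, B (x i) (r i)
        = ∏ i, A (p i) (x i) * B (x i) (r i) :=
    fun x => (Finset.prod_mul_distrib).symm
  simp_rw [hmerge]
  rw [show (Finset.univ : Finset (Fin n → Fin 2 × Fin 2)) =
      Fintype.piFinset (fun _ => Finset.univ) from (Fintype.piFinset_univ).symm]
  exact (Finset.prod_univ_sum (fun _ => (Finset.univ : Finset (Fin 2 × Fin 2)))
    (fun i j => A (p i) j * B j (r i))).symm

lemma TP_conjTranspose (n : ℕ) (A : Matrix (Fin 2 × Fin 2) (Fin 2 × Fin 2) ℂ) :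
    (TP n A)ᴴ = TP n Aᴴ := by
  ext p q
  simp [TP, Matrix.conjTranspose_apply, map_prod]

lemma TP_smul (n : ℕ) (c : ℂ) (A : Matrix (Fin 2 × Fin 2) (Fin 2 × Fin 2) ℂ) :
    TP n (c • A) = c ^ n • TP n A := by
  ext p q
  simp [TP, Finset.prod_mul_distrib]

/-- If `B` is a Hermitian projection, then `6⁻ⁿ • (1 - TP n B)` is PSD. -/
lemma key (n : ℕ) (B : Matrix (Fin 2 × Fin 2) (Fin 2 × Fin 2) ℂ)
    (hH : Bᴴ = B) (hP : B * B = B) :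
    (((6:ℂ)^n)⁻¹ • ((1 : Matrix (Fin n → Fin 2 × Fin 2) (Fin n → Fin 2 × Fin 2) ℂ)
      - TP n B)).PosSemidef := by
  set Q : Matrix (Fin n → Fin 2 × Fin 2) (Fin n → Fin 2 × Fin 2) ℂ := 1 - TP n B with hQ
  have hQH : Qᴴ = Q := by
    rw [hQ, conjTranspose_sub, conjTranspose_one, TP_conjTranspose, hH]
  have hTPid : TP n B * TP n B = TP n B := by rw [TP_mul, hP]
  have hQ2 : Q * Q = Q := by
    rw [hQ]
    simp only [Matrix.sub_mul, Matrix.mul_sub, Matrix.one_mul, Matrix.mul_one, hTPid]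
    abel
  set c : ℂ := ((Real.sqrt 6 ^ n : ℝ) : ℂ)⁻¹ with hc
  have hcc : star c * c = ((6:ℂ)^n)⁻¹ := by
    have hr : ((Real.sqrt 6 ^ n)⁻¹ * (Real.sqrt 6 ^ n)⁻¹ : ℝ) = ((6:ℝ)^n)⁻¹ := by
      rw [← mul_inv, ← mul_pow, Real.mul_self_sqrt (by norm_num)]
    rw [hc, Complex.star_def, ← Complex.ofReal_inv, Complex.conj_ofReal,
      ← Complex.ofReal_mul, hr]
    push_cast
    ring
  have : ((6:ℂ)^n)⁻¹ • Q = (c • Q)ᴴ * (c • Q) := by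
    rw [conjTranspose_smul, hQH, Matrix.smul_mul, Matrix.mul_smul, smul_smul, hQ2, hcc]
  rw [this]
  exact posSemidef_conjTranspose_mul_self _

lemma proj0 : (3 : ℂ) • toPair rho0 * ((3 : ℂ) • toPair rho0) = (3 : ℂ) • toPair rho0 := by
  ext ⟨a, b⟩ ⟨c, d⟩
  fin_cases a <;> fin_cases b <;> fin_cases c <;> fin_cases d <;>
    simp [toPair, rho0, enc, Matrix.mul_apply, Fintype.sum_prod_type,
      Fin.sum_univ_two, Matrix.vecHead, Matrix.vecTail] <;> norm_num

lemma herm0 : ((3 : ℂ) • toPair rho0)ᴴ = (3 : ℂ) • toPair rho0 := by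
  ext ⟨a, b⟩ ⟨c, d⟩
  fin_cases a <;> fin_cases b <;> fin_cases c <;> fin_cases d <;>
    simp [toPair, rho0, enc, Matrix.conjTranspose_apply, Matrix.vecHead, Matrix.vecTail] <;> norm_num

lemma proj1 : (3 : ℂ) • ptB2 (toPair rho1) * ((3 : ℂ) • ptB2 (toPair rho1))
    = (3 : ℂ) • ptB2 (toPair rho1) := by
  ext ⟨a, b⟩ ⟨c, d⟩
  fin_cases a <;> fin_cases b <;> fin_cases c <;> fin_cases d <;>
    simp [toPair, rho1, ptB2, enc, Matrix.mul_apply, Fintype.sum_prod_type,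
      Fin.sum_univ_two, Matrix.vecHead, Matrix.vecTail] <;> norm_num

lemma herm1 : ((3 : ℂ) • ptB2 (toPair rho1))ᴴ = (3 : ℂ) • ptB2 (toPair rho1) := by
  ext ⟨a, b⟩ ⟨c, d⟩
  fin_cases a <;> fin_cases b <;> fin_cases c <;> fin_cases d <;>
    simp [toPair, rho1, ptB2, enc, Matrix.conjTranspose_apply, Matrix.vecHead, Matrix.vecTail] <;> norm_num

lemma rewrite_target (n : ℕ) (A : Matrix (Fin 2 × Fin 2) (Fin 2 × Fin 2) ℂ) :
    ((6:ℂ)^n)⁻¹ • (1 : Matrix (Fin n → Fin 2 × Fin 2) (Fin n → Fin 2 × Fin 2) ℂ)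
      - ((2:ℂ)^n)⁻¹ • TP n A
    = ((6:ℂ)^n)⁻¹ • ((1 : Matrix (Fin n → Fin 2 × Fin 2) (Fin n → Fin 2 × Fin 2) ℂ)
      - TP n ((3:ℂ) • A)) := by
  rw [TP_smul, smul_sub, smul_smul]
  congr 2
  rw [show ((6:ℂ)^n)⁻¹ * 3^n = ((2:ℂ)^n)⁻¹ by
    rw [show ((6:ℂ)) = 2*3 by norm_num, mul_pow, mul_inv, mul_assoc,
      inv_mul_cancel₀ (pow_ne_zero _ (by norm_num : (3:ℂ) ≠ 0)), mul_one]]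

theorem stmt11 (n : ℕ) (hn : 1 ≤ n) :
    (((6:ℂ)^n)⁻¹ • (1 : Matrix (Fin n → Fin 2 × Fin 2) (Fin n → Fin 2 × Fin 2) ℂ)
      - ((2:ℂ)^n)⁻¹ • TP n (toPair rho0)).PosSemidef ∧
    (((6:ℂ)^n)⁻¹ • (1 : Matrix (Fin n → Fin 2 × Fin 2) (Fin n → Fin 2 × Fin 2) ℂ)
      - ((2:ℂ)^n)⁻¹ • TP n (ptB2 (toPair rho1))).PosSemidef := by
  constructor
  · rw [rewrite_target]
    exact key n _ herm0 proj0
  · rw [rewrite_target]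
    exact key n _ herm1 proj1
end

section
/- Suppose Q ⪰ 0 is a matrix on (ℂ²⊗ℂ²)^{⊗n} satisfying I/6^n − Q^{T_B} − ρ_s/2^n ⪰ 0, where ρ_s = ρ_{s₁}⊗⋯⊗ρ_{s_n} for some s ∈ {0,1}^n. Then Q' := Q ⊗ (ρ₀^{T_B}/2) satisfies Q' ⪰ 0 and I/6^{n+1} − Q'^{T_B} − (ρ_s⊗ρ₀)/2^{n+1} ⪰ 0; concretely, the latter equals (I/6^n − Q^{T_B} − ρ_s/2^n) ⊗ (ρ₀/2) + (I_{4^n}/6^n) ⊗ ((2ρ₁ − ρ₀)/6), a sum of two positive semidefinite matrices. -/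
open Matrix ComplexOrder

/-- Tensor a matrix on n pairs with a matrix on a single extra pair. -/
noncomputable def tensSnoc {n : ℕ}
    (M : Matrix (Fin n → Fin 2 × Fin 2) (Fin n → Fin 2 × Fin 2) ℂ)
    (N : Matrix (Fin 2 × Fin 2) (Fin 2 × Fin 2) ℂ) :
    Matrix (Fin (n+1) → Fin 2 × Fin 2) (Fin (n+1) → Fin 2 × Fin 2) ℂ :=
  Matrix.of fun p q =>
    M (fun i => p i.castSucc) (fun i => q i.castSucc) * N (p (Fin.last n)) (q (Fin.last n))


section Aux
open Kronecker


lemma psd_smul' {m : Type*} [Fintype m] {M : Matrix m m ℂ} (hM : M.PosSemidef)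
    {c : ℝ} (hc : 0 ≤ c) : ((c:ℂ) • M).PosSemidef := by
  refine Matrix.PosSemidef.of_dotProduct_mulVec_nonneg ?_ ?_
  · unfold Matrix.IsHermitian
    rw [conjTranspose_smul, hM.1]
    simp [Complex.conj_ofReal]
  · intro x
    rw [smul_mulVec, dotProduct_smul, smul_eq_mul]
    exact mul_nonneg (by exact_mod_cast Complex.zero_le_real.2 hc) (hM.dotProduct_mulVec_nonneg x)

lemma psd_kron {m l : Type*} [Fintype m] [Fintype l] [DecidableEq m] [DecidableEq l]
    {A : Matrix m m ℂ} {B : Matrix l l ℂ} (hA : A.PosSemidef) (hB : B.PosSemidef) :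
    (A ⊗ₖ B).PosSemidef := by
  exact Matrix.PosSemidef.kronecker hA hB

lemma tensSnoc_eq_submatrix {n : ℕ}
    (M : Matrix (Fin n → Fin 2 × Fin 2) (Fin n → Fin 2 × Fin 2) ℂ)
    (N : Matrix (Fin 2 × Fin 2) (Fin 2 × Fin 2) ℂ) :
    tensSnoc M N = (M ⊗ₖ N).submatrix
      (fun p => (fun i => p i.castSucc, p (Fin.last n)))
      (fun p => (fun i => p i.castSucc, p (Fin.last n))) := rfl

lemma psd_tensSnoc {n : ℕ}
    {M : Matrix (Fin n → Fin 2 × Fin 2) (Fin n → Fin 2 × Fin 2) ℂ}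
    {N : Matrix (Fin 2 × Fin 2) (Fin 2 × Fin 2) ℂ}
    (hM : M.PosSemidef) (hN : N.PosSemidef) : (tensSnoc M N).PosSemidef := by
  rw [tensSnoc_eq_submatrix]
  exact (psd_kron hM hN).submatrix _

lemma toPair_eq_submatrix (A : Matrix (Fin 4) (Fin 4) ℂ) :
    toPair A = A.submatrix enc enc := rfl

lemma psd_of_sq (A : Matrix (Fin 4) (Fin 4) ℂ) {m : ℕ} (B : Matrix (Fin m) (Fin 4) ℂ)
    (h : A = Bᴴ * B) : A.PosSemidef := h ▸ Matrix.posSemidef_conjTranspose_mul_self B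

lemma psd_M0 : (!![2,0,0,0; 0,1,1,0; 0,1,1,0; 0,0,0,2] : Matrix (Fin 4) (Fin 4) ℂ).PosSemidef := by
  apply psd_of_sq _ (!![1,0,0,0; 1,0,0,0; 0,1,1,0; 0,0,0,1; 0,0,0,1] : Matrix (Fin 5) (Fin 4) ℂ)
  ext i j
  fin_cases i <;> fin_cases j <;>
    simp [Matrix.mul_apply, Fin.sum_univ_five, Matrix.vecHead, Matrix.vecTail] <;> norm_num

lemma psd_MT : (!![2,0,0,1; 0,1,0,0; 0,0,1,0; 1,0,0,2] : Matrix (Fin 4) (Fin 4) ℂ).PosSemidef := by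
  apply psd_of_sq _ (!![1,0,0,1; 1,0,0,0; 0,0,0,1; 0,1,0,0; 0,0,1,0] : Matrix (Fin 5) (Fin 4) ℂ)
  ext i j
  fin_cases i <;> fin_cases j <;>
    simp [Matrix.mul_apply, Fin.sum_univ_five, Matrix.vecHead, Matrix.vecTail] <;> norm_num

set_option linter.unreachableTactic false in
set_option linter.unusedTactic false in
lemma psd_MV : (!![0,0,0,0; 0,1,-1,0; 0,-1,1,0; 0,0,0,0] : Matrix (Fin 4) (Fin 4) ℂ).PosSemidef := by
  apply psd_of_sq _ (!![0,1,-1,0] : Matrix (Fin 1) (Fin 4) ℂ)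
  ext i j
  fin_cases i <;> fin_cases j <;>
    simp [Matrix.mul_apply, Fin.sum_univ_one, Matrix.vecHead, Matrix.vecTail] <;> norm_num

set_option linter.unreachableTactic false in
set_option linter.unusedTactic false in
lemma ptB2_toPair_rho0 : ptB2 (toPair rho0)
    = (1/6 : ℂ) • toPair !![2,0,0,1; 0,1,0,0; 0,0,1,0; 1,0,0,2] := by
  ext ⟨a1, a2⟩ ⟨b1, b2⟩
  fin_cases a1 <;> fin_cases a2 <;> fin_cases b1 <;> fin_cases b2 <;>
    simp [ptB2, toPair, rho0, enc, Matrix.vecHead, Matrix.vecTail] <;> norm_num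

lemma twoRho1_sub_rho0 : (2:ℂ) • toPair rho1 - toPair rho0
    = (1/2 : ℂ) • toPair !![0,0,0,0; 0,1,-1,0; 0,-1,1,0; 0,0,0,0] := by
  ext ⟨a1, a2⟩ ⟨b1, b2⟩
  fin_cases a1 <;> fin_cases a2 <;> fin_cases b1 <;> fin_cases b2 <;>
    simp [toPair, rho0, rho1, enc, Matrix.vecHead, Matrix.vecTail] <;> norm_num

lemma key_id : ∀ a b : Fin 2 × Fin 2,
    (if a = b then (1:ℂ) else 0) = 2 * toPair rho0 a b + 2 * toPair rho1 a b := by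
  rintro ⟨a1, a2⟩ ⟨b1, b2⟩
  fin_cases a1 <;> fin_cases a2 <;> fin_cases b1 <;> fin_cases b2 <;>
    simp [toPair, rho0, rho1, enc, Prod.ext_iff, Matrix.vecHead, Matrix.vecTail] <;> norm_num

lemma funSnoc_eq_iff {n : ℕ} {X : Type*} (p q : Fin (n+1) → X) :
    p = q ↔ ((fun i : Fin n => p i.castSucc) = (fun i => q i.castSucc)
      ∧ p (Fin.last n) = q (Fin.last n)) := by
  constructor
  · rintro rfl; exact ⟨rfl, rfl⟩
  · rintro ⟨h1, h2⟩
    funext i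
    refine Fin.lastCases h2 (fun j => ?_) i
    exact congrFun h1 j

lemma psd_twelfth_toPair (A : Matrix (Fin 4) (Fin 4) ℂ) (hA : A.PosSemidef) :
    ((1/12 : ℂ) • toPair A).PosSemidef := by
  have h : ((1/12 : ℝ) : ℂ) = (1/12 : ℂ) := by norm_num
  rw [← h]
  exact psd_smul' (toPair_eq_submatrix A ▸ hA.submatrix enc) (by norm_num)

end Aux

theorem stmt12 (n : ℕ) (s : Fin n → Bool)
    (Q : Matrix (Fin n → Fin 2 × Fin 2) (Fin n → Fin 2 × Fin 2) ℂ)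
    (hQ : Q.PosSemidef)
    (hfeas : (((6:ℂ)^n)⁻¹ • (1 : Matrix (Fin n → Fin 2 × Fin 2) (Fin n → Fin 2 × Fin 2) ℂ)
      - ptBn Q - ((2:ℂ)^n)⁻¹ • rhoProd s).PosSemidef) :
    (tensSnoc Q ((1/2 : ℂ) • ptB2 (toPair rho0))).PosSemidef ∧
    (((6:ℂ)^(n+1))⁻¹ • (1 : Matrix (Fin (n+1) → Fin 2 × Fin 2) (Fin (n+1) → Fin 2 × Fin 2) ℂ)
        - ptBn (tensSnoc Q ((1/2 : ℂ) • ptB2 (toPair rho0)))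
        - ((2:ℂ)^(n+1))⁻¹ • rhoProd (Fin.snoc s false)).PosSemidef ∧
    ((6:ℂ)^(n+1))⁻¹ • (1 : Matrix (Fin (n+1) → Fin 2 × Fin 2) (Fin (n+1) → Fin 2 × Fin 2) ℂ)
        - ptBn (tensSnoc Q ((1/2 : ℂ) • ptB2 (toPair rho0)))
        - ((2:ℂ)^(n+1))⁻¹ • rhoProd (Fin.snoc s false)
      = tensSnoc (((6:ℂ)^n)⁻¹ • (1 : Matrix (Fin n → Fin 2 × Fin 2) (Fin n → Fin 2 × Fin 2) ℂ)
            - ptBn Q - ((2:ℂ)^n)⁻¹ • rhoProd s) ((1/2 : ℂ) • toPair rho0)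
        + tensSnoc (((6:ℂ)^n)⁻¹ • (1 : Matrix (Fin n → Fin 2 × Fin 2) (Fin n → Fin 2 × Fin 2) ℂ))
            ((1/6 : ℂ) • ((2:ℂ) • toPair rho1 - toPair rho0)) := by
  have hN : ((1/2 : ℂ) • ptB2 (toPair rho0)).PosSemidef := by
    rw [ptB2_toPair_rho0, smul_smul]
    have h12 : (1/2 : ℂ) * (1/6) = (1/12 : ℂ) := by norm_num
    rw [h12]
    exact psd_twelfth_toPair _ psd_MT
  have part1 : (tensSnoc Q ((1/2 : ℂ) • ptB2 (toPair rho0))).PosSemidef :=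
    psd_tensSnoc hQ hN
  have part3 : ((6:ℂ)^(n+1))⁻¹ • (1 : Matrix (Fin (n+1) → Fin 2 × Fin 2) (Fin (n+1) → Fin 2 × Fin 2) ℂ)
        - ptBn (tensSnoc Q ((1/2 : ℂ) • ptB2 (toPair rho0)))
        - ((2:ℂ)^(n+1))⁻¹ • rhoProd (Fin.snoc s false)
      = tensSnoc (((6:ℂ)^n)⁻¹ • (1 : Matrix (Fin n → Fin 2 × Fin 2) (Fin n → Fin 2 × Fin 2) ℂ)
            - ptBn Q - ((2:ℂ)^n)⁻¹ • rhoProd s) ((1/2 : ℂ) • toPair rho0)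
        + tensSnoc (((6:ℂ)^n)⁻¹ • (1 : Matrix (Fin n → Fin 2 × Fin 2) (Fin n → Fin 2 × Fin 2) ℂ))
            ((1/6 : ℂ) • ((2:ℂ) • toPair rho1 - toPair rho0)) := by
    ext p q
    have hsplit : (if p = q then (1:ℂ) else 0)
        = (if (fun i : Fin n => p i.castSucc) = (fun i => q i.castSucc) then (1:ℂ) else 0)
          * (if p (Fin.last n) = q (Fin.last n) then (1:ℂ) else 0) := by
      by_cases h1 : (fun i : Fin n => p i.castSucc) = (fun i => q i.castSucc) <;>
        by_cases h2 : p (Fin.last n) = q (Fin.last n) <;>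
        simp [funSnoc_eq_iff, h1, h2]
    simp only [Matrix.sub_apply, Matrix.add_apply, Matrix.smul_apply, smul_eq_mul,
      Matrix.one_apply, tensSnoc, ptBn, ptB2, rhoProd, Matrix.of_apply,
      Fin.prod_univ_castSucc, Fin.snoc_castSucc, Fin.snoc_last, Bool.false_eq_true,
      if_false, Prod.mk.eta, hsplit]
    rw [key_id (p (Fin.last n)) (q (Fin.last n))]
    simp only [pow_succ, mul_inv]
    ring
  have hA : ((1/2 : ℂ) • toPair rho0).PosSemidef := by
    have h0 : toPair rho0 = (1/6 : ℂ) • toPair !![2,0,0,0; 0,1,1,0; 0,1,1,0; 0,0,0,2] := rfl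
    rw [h0, smul_smul]
    have h12 : (1/2 : ℂ) * (1/6) = (1/12 : ℂ) := by norm_num
    rw [h12]
    exact psd_twelfth_toPair _ psd_M0
  have hB : ((1/6 : ℂ) • ((2:ℂ) • toPair rho1 - toPair rho0)).PosSemidef := by
    rw [twoRho1_sub_rho0, smul_smul]
    have h12 : (1/6 : ℂ) * (1/2) = (1/12 : ℂ) := by norm_num
    rw [h12]
    exact psd_twelfth_toPair _ psd_MV
  have hone : (((6:ℂ)^n)⁻¹ • (1 : Matrix (Fin n → Fin 2 × Fin 2) (Fin n → Fin 2 × Fin 2) ℂ)).PosSemidef := by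
    have h6 : ((6:ℂ)^n)⁻¹ = ((((6:ℝ)^n)⁻¹ : ℝ) : ℂ) := by push_cast; ring
    rw [h6]
    exact psd_smul' Matrix.PosSemidef.one (by positivity)
  have part2 : (((6:ℂ)^(n+1))⁻¹ • (1 : Matrix (Fin (n+1) → Fin 2 × Fin 2) (Fin (n+1) → Fin 2 × Fin 2) ℂ)
        - ptBn (tensSnoc Q ((1/2 : ℂ) • ptB2 (toPair rho0)))
        - ((2:ℂ)^(n+1))⁻¹ • rhoProd (Fin.snoc s false)).PosSemidef := by
    rw [part3]
    exact (psd_tensSnoc hfeas hA).add (psd_tensSnoc hone hB)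
  exact ⟨part1, part2, part3⟩
end

section
/- The LOCC strategy of measuring both Bell pairs in the computational basis and answering 'antisymmetric' iff both pairs yield unequal outcomes succeeds with probability (1/2)·1 + (1/2)·(1 − 1/9) = 17/18 on the two-copy symmetric/antisymmetric protocol; explicitly, with Π₁ = P_≠ ⊗ P_≠ where P_≠ = |01⟩⟨01|+|10⟩⟨10| and Π₀ = I₁₆ − Π₁, one has Tr[Π₁(ρ₁⊗ρ₁)] = 1 and Tr[Π₀(ρ₀⊗ρ₀)] = 8/9. -/
open Matrix ComplexOrder

open Kronecker

noncomputable def rhoAnti : Matrix (Fin 4) (Fin 4) ℂ :=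
  (1/2 : ℂ) • !![0,0,0,0; 0,1,-1,0; 0,-1,1,0; 0,0,0,0]

noncomputable def Pneq : Matrix (Fin 4) (Fin 4) ℂ := !![0,0,0,0; 0,1,0,0; 0,0,1,0; 0,0,0,0]

noncomputable def Pi1 : Matrix (Fin 4 × Fin 4) (Fin 4 × Fin 4) ℂ := Pneq ⊗ₖ Pneq

noncomputable def Pi0 : Matrix (Fin 4 × Fin 4) (Fin 4 × Fin 4) ℂ := 1 - Pi1

lemma tr1 : (Pneq * rhoAnti).trace = 1 := by
  simp [Pneq, rhoAnti, Matrix.trace, Matrix.mul_apply, Fin.sum_univ_four, Matrix.diag]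
  norm_num

lemma tr2 : (Pneq * rho0).trace = 1/3 := by
  simp [Pneq, rho0, Matrix.trace, Matrix.mul_apply, Fin.sum_univ_four, Matrix.diag]
  norm_num

lemma tr3 : rho0.trace = 1 := by
  simp [rho0, Matrix.trace, Fin.sum_univ_four, Matrix.diag]
  norm_num

lemma h1 : (Pi1 * (rhoAnti ⊗ₖ rhoAnti)).trace = 1 := by
  rw [Pi1, ← Matrix.mul_kronecker_mul, Matrix.trace_kronecker, tr1]
  norm_num

lemma h2 : (Pi0 * (rho0 ⊗ₖ rho0)).trace = 8/9 := by
  rw [Pi0, sub_mul, one_mul, Matrix.trace_sub, Matrix.trace_kronecker, tr3,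
    Pi1, ← Matrix.mul_kronecker_mul, Matrix.trace_kronecker, tr2]
  norm_num

theorem stmt19 :
    (Pi1 * (rhoAnti ⊗ₖ rhoAnti)).trace = 1 ∧
    (Pi0 * (rho0 ⊗ₖ rho0)).trace = 8/9 ∧
    ((1/2 : ℂ) * (Pi0 * (rho0 ⊗ₖ rho0)).trace + (1/2 : ℂ) * (Pi1 * (rhoAnti ⊗ₖ rhoAnti)).trace
      = (1/2 : ℂ) * 1 + (1/2 : ℂ) * (1 - 1/9)) ∧
    (1/2 : ℝ) * 1 + (1/2 : ℝ) * (1 - 1/9) = 17/18 := by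
  refine ⟨h1, h2, ?_, by norm_num⟩
  rw [h1, h2]; norm_num
end
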